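/- arXiv:cond-mat/0501334 — 7 statements merged into one kernel-verified Lean document; each statement's English description precedes it below -/
import Mathlib

section
/- Let ψ, φ₁, φ₂, φ₃ : ℝ → ℝ³ be curves, twice differentiable at 0, with ψ(0) = φⱼ(0) = p, |ψ'(0)| = |φⱼ'(0)| = 1. For j = 1,2,3 let nⱼ be a unit vector with ⟨nⱼ, ψ'(0)⟩ = 0, and assume normal incidence: φⱼ'(0) = nⱼ × ψ'(0). Let γⱼ, Hⱼ be real numbers such that 2Hⱼ = ⟨φⱼ''(0), nⱼ⟩ + ⟨ψ''(0), nⱼ⟩ (the mean curvature of film j as the trace over the orthonormal tangent pair (φⱼ'(0), ψ'(0))), and assume Σⱼ γⱼ·(nⱼ × ψ'(0)) = 0 (Plateau's force balance) and Σⱼ γⱼHⱼ = 0 (Laplace's pressure balance around the border). Then Σⱼ γⱼ·φⱼ'(0) = 0 and Σⱼ γⱼ·⟨φⱼ''(0), ψ'(0) × φⱼ'(0)⟩ = 0; that is, the 2D foam traced on the solid surface satisfies the two-dimensional Plateau conditions: the weighted tangents and the weighted geodesic curvatures of the contact curves both sum to zero at the vertex p. -/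
open scoped RealInnerProductSpace

/-- The cross product on `EuclideanSpace ℝ (Fin 3)`. -/
noncomputable def cross3 (u v : EuclideanSpace ℝ (Fin 3)) : EuclideanSpace ℝ (Fin 3) :=
  (WithLp.equiv 2 (Fin 3 → ℝ)).symm
    ![u 1 * v 2 - u 2 * v 1, u 2 * v 0 - u 0 * v 2, u 0 * v 1 - u 1 * v 0]

lemma cross3_apply0 (u v : EuclideanSpace ℝ (Fin 3)) :
    cross3 u v 0 = u 1 * v 2 - u 2 * v 1 := by simp [cross3]

lemma cross3_apply1 (u v : EuclideanSpace ℝ (Fin 3)) :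
    cross3 u v 1 = u 2 * v 0 - u 0 * v 2 := by simp [cross3]

lemma cross3_apply2 (u v : EuclideanSpace ℝ (Fin 3)) :
    cross3 u v 2 = u 0 * v 1 - u 1 * v 0 := by simp [cross3]

lemma inner3 (x y : EuclideanSpace ℝ (Fin 3)) :
    ⟪x, y⟫ = x 0 * y 0 + x 1 * y 1 + x 2 * y 2 := by
  simp [PiLp.inner_apply, RCLike.inner_apply, conj_trivial, Fin.sum_univ_three]; ring

lemma norm3 (x : EuclideanSpace ℝ (Fin 3)) (h : ‖x‖ = 1) :
    x 0 * x 0 + x 1 * x 1 + x 2 * x 2 = 1 := by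
  have := real_inner_self_eq_norm_sq x
  rw [h] at this
  rw [inner3] at this
  nlinarith [this]

/-- `a × (b × a) = b` when `‖a‖ = 1` and `⟪b, a⟫ = 0`. -/
lemma cross3_cross3 (a b : EuclideanSpace ℝ (Fin 3)) (ha : ‖a‖ = 1) (hb : ⟪b, a⟫ = 0) :
    cross3 a (cross3 b a) = b := by
  have hn := norm3 a ha
  rw [inner3] at hb
  ext i
  fin_cases i
  · show cross3 a (cross3 b a) 0 = b 0
    rw [cross3_apply0, cross3_apply1, cross3_apply2]; linear_combination b 0 * hn - a 0 * hb
  · show cross3 a (cross3 b a) 1 = b 1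
    rw [cross3_apply1, cross3_apply2, cross3_apply0]; linear_combination b 1 * hn - a 1 * hb
  · show cross3 a (cross3 b a) 2 = b 2
    rw [cross3_apply2, cross3_apply0, cross3_apply1]; linear_combination b 2 * hn - a 2 * hb

/-- `cross3 a` as a linear map. -/
noncomputable def cross3L (a : EuclideanSpace ℝ (Fin 3)) :
    EuclideanSpace ℝ (Fin 3) →ₗ[ℝ] EuclideanSpace ℝ (Fin 3) where
  toFun := cross3 a
  map_add' u v := by
    ext i
    fin_cases i
    · show cross3 a (u + v) 0 = cross3 a u 0 + cross3 a v 0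
      simp only [cross3_apply0, PiLp.add_apply]; ring
    · show cross3 a (u + v) 1 = cross3 a u 1 + cross3 a v 1
      simp only [cross3_apply1, PiLp.add_apply]; ring
    · show cross3 a (u + v) 2 = cross3 a u 2 + cross3 a v 2
      simp only [cross3_apply2, PiLp.add_apply]; ring
  map_smul' c u := by
    ext i
    fin_cases i
    · show cross3 a (c • u) 0 = c * cross3 a u 0
      simp only [cross3_apply0, PiLp.smul_apply, smul_eq_mul]; ring
    · show cross3 a (c • u) 1 = c * cross3 a u 1
      simp only [cross3_apply1, PiLp.smul_apply, smul_eq_mul]; ring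
    · show cross3 a (c • u) 2 = c * cross3 a u 2
      simp only [cross3_apply2, PiLp.smul_apply, smul_eq_mul]; ring

/-- The 2D foam traced on the solid surface by a Plateau border `ψ` and three films with
contact curves `φⱼ` meeting at a vertex `p` with normal incidence satisfies the
two-dimensional Plateau conditions: the weighted tangents and the weighted geodesic
curvatures of the contact curves both sum to zero at `p`. -/
theorem stmt3 (p : EuclideanSpace ℝ (Fin 3))
    (ψ : ℝ → EuclideanSpace ℝ (Fin 3)) (dψ : ℝ → EuclideanSpace ℝ (Fin 3))
    (ψ'' : EuclideanSpace ℝ (Fin 3))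
    (hψd : ∀ᶠ s in nhds 0, HasDerivAt ψ (dψ s) s) (hψdd : HasDerivAt dψ ψ'' 0)
    (φ : Fin 3 → ℝ → EuclideanSpace ℝ (Fin 3)) (dφ : Fin 3 → ℝ → EuclideanSpace ℝ (Fin 3))
    (φ'' : Fin 3 → EuclideanSpace ℝ (Fin 3))
    (hφd : ∀ j, ∀ᶠ s in nhds 0, HasDerivAt (φ j) (dφ j s) s) (hφdd : ∀ j, HasDerivAt (dφ j) (φ'' j) 0)
    (hψ0 : ψ 0 = p) (hφ0 : ∀ j, φ j 0 = p)
    (hψunit : ‖dψ 0‖ = 1) (hφunit : ∀ j, ‖dφ j 0‖ = 1)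
    (n : Fin 3 → EuclideanSpace ℝ (Fin 3))
    (hnunit : ∀ j, ‖n j‖ = 1) (hnorth : ∀ j, ⟪n j, dψ 0⟫ = 0)
    -- normal incidence: the contact curve tangent is the co-normal of film j
    (hNI : ∀ j, dφ j 0 = cross3 (n j) (dψ 0))
    (γ H : Fin 3 → ℝ)
    -- mean curvature of film j as trace over the orthonormal tangent pair (φⱼ'(0), ψ'(0))
    (hH : ∀ j, 2 * H j = ⟪φ'' j, n j⟫ + ⟪ψ'', n j⟫)
    -- Plateau's force balance along the border
    (hPlateau : ∑ j, γ j • cross3 (n j) (dψ 0) = 0)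
    -- Laplace's pressure balance around the border
    (hLaplace : ∑ j, γ j * H j = 0) :
    (∑ j, γ j • dφ j 0 = 0) ∧
    (∑ j, γ j * ⟪φ'' j, cross3 (dψ 0) (dφ j 0)⟫ = 0) := by
  have hkey : ∀ j, cross3 (dψ 0) (dφ j 0) = n j := by
    intro j
    rw [hNI j]
    exact cross3_cross3 (dψ 0) (n j) hψunit (hnorth j)
  constructor
  · simp only [hNI]
    exact hPlateau
  · -- sum of γ j • n j is zero
    have hn0 : ∑ j, γ j • n j = 0 := by
      have : cross3L (dψ 0) (∑ j, γ j • cross3 (n j) (dψ 0)) = 0 := by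
        rw [hPlateau]; exact map_zero _
      rw [map_sum] at this
      simp only [map_smul] at this
      have he : ∀ j, cross3L (dψ 0) (cross3 (n j) (dψ 0)) = n j := fun j =>
        cross3_cross3 (dψ 0) (n j) hψunit (hnorth j)
      simpa [he] using this
    have h1 : ∀ j, γ j * ⟪φ'' j, cross3 (dψ 0) (dφ j 0)⟫ =
        2 * (γ j * H j) - γ j * ⟪ψ'', n j⟫ := by
      intro j
      rw [hkey j]
      have := hH j
      linear_combination (-γ j) * this
    rw [Finset.sum_congr rfl fun j _ => h1 j]
    rw [Finset.sum_sub_distrib, ← Finset.mul_sum, hLaplace]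
    have : ∑ j, γ j * ⟪ψ'', n j⟫ = ⟪ψ'', ∑ j, γ j • n j⟫ := by
      rw [inner_sum]
      exact Finset.sum_congr rfl fun j _ => by rw [real_inner_smul_right]
    rw [this, hn0, inner_zero_right]
    ring
end

section
/- Let φ : ℝ → ℂ be twice differentiable at t with φ'(t) ≠ 0, and let f be holomorphic on a neighbourhood of φ(t) with f'(φ(t)) ≠ 0. Then the signed curvature k̃ of the image curve f∘φ at t satisfies k̃(t) = (1/|f'(φ(t))|)·( k(t) + Re( −i·(f''(φ(t))/f'(φ(t)))·τ(t) ) ), where k and τ are the signed curvature and unit tangent of φ at t. (This is the paper's transformation rule (eqCTransformK) for the curvature of a path under a conformal map.) -/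
/-- The unit tangent `τ(t) = φ'(t)/|φ'(t)|` of a planar curve `φ : ℝ → ℂ`. -/
noncomputable def unitTangent (φ : ℝ → ℂ) (t : ℝ) : ℂ :=
  deriv φ t / (‖deriv φ t‖ : ℂ)

/-- The unit normal `n(t) = i·τ(t)` of a planar curve `φ : ℝ → ℂ`. -/
noncomputable def unitNormal (φ : ℝ → ℂ) (t : ℝ) : ℂ :=
  Complex.I * unitTangent φ t

/-- The signed curvature `k(t) = Re(conj(n(t))·φ''(t))/|φ'(t)|²` of a planar curve. -/
noncomputable def curv (φ : ℝ → ℂ) (t : ℝ) : ℝ :=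
  ((starRingEnd ℂ) (unitNormal φ t) * deriv (deriv φ) t).re / ‖deriv φ t‖ ^ 2


lemma chain_deriv (g : ℂ → ℂ) (φ : ℝ → ℂ) (t : ℝ)
    (hg : DifferentiableAt ℂ g (φ t)) (hφ : DifferentiableAt ℝ φ t) :
    deriv (g ∘ φ) t = deriv φ t * deriv g (φ t) := by
  have := (hg.hasDerivAt.scomp t hφ.hasDerivAt)
  simpa [smul_eq_mul] using this.deriv
open Complex

lemma alg (A W C B : ℂ) (hA : A ≠ 0) (hW : W ≠ 0) :
    ((starRingEnd ℂ) (Complex.I * (W * A / (‖W * A‖ : ℂ))) * (C * A + W * (W * B))).re / ‖W * A‖ ^ 2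
      = (1 / ‖A‖) * ((((starRingEnd ℂ) (Complex.I * (W / (‖W‖ : ℂ))) * C).re / ‖W‖ ^ 2)
          + (-Complex.I * (B / A) * (W / (‖W‖ : ℂ))).re) := by
  have hnA : ‖A‖ ≠ 0 := norm_ne_zero_iff.mpr hA
  have hnW : ‖W‖ ≠ 0 := norm_ne_zero_iff.mpr hW
  have e1 : (starRingEnd ℂ) A * A = ((‖A‖ : ℂ)) ^ 2 := by
    rw [mul_comm, Complex.mul_conj, Complex.normSq_eq_norm_sq]
    push_cast; ring
  have e2 : (starRingEnd ℂ) W * W = ((‖W‖ : ℂ)) ^ 2 := by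
    rw [mul_comm, Complex.mul_conj, Complex.normSq_eq_norm_sq]
    push_cast; ring
  -- LHS
  have hnum : (starRingEnd ℂ) (Complex.I * (W * A)) * (C * A + W * (W * B))
      = (-Complex.I * (starRingEnd ℂ) W * C) * ((‖A‖ : ℂ))^2
        + (-Complex.I * W * (starRingEnd ℂ) A * B) * ((‖W‖ : ℂ))^2 := by
    simp only [map_mul, Complex.conj_I]
    linear_combination (-Complex.I * (starRingEnd ℂ) W * C) * e1
      + (-Complex.I * W * (starRingEnd ℂ) A * B) * e2
  have hL : ((starRingEnd ℂ) (Complex.I * (W * A / (‖W * A‖ : ℂ))) * (C * A + W * (W * B))).re / ‖W * A‖ ^ 2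
      = ((-Complex.I * (starRingEnd ℂ) W * C).re * ‖A‖^2
          + (-Complex.I * W * (starRingEnd ℂ) A * B).re * ‖W‖^2) / (‖A‖^3 * ‖W‖^3) := by
    have : Complex.I * (W * A / (‖W * A‖ : ℂ)) = Complex.I * (W * A) / (‖W * A‖ : ℂ) := by ring
    rw [this, map_div₀, Complex.conj_ofReal, div_mul_eq_mul_div, hnum, Complex.div_ofReal_re]
    rw [norm_mul]
    simp only [← Complex.ofReal_pow, Complex.add_re, Complex.mul_re, Complex.ofReal_re,
      Complex.ofReal_im]
    field_simp
    ring
  rw [hL]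
  -- RHS second term
  have h2 : (-Complex.I * (B / A) * (W / (‖W‖ : ℂ)))
      = (-Complex.I * W * (starRingEnd ℂ) A * B) / ((‖A‖^2 * ‖W‖ : ℝ) : ℂ) := by
    have hden : (((‖A‖^2 * ‖W‖ : ℝ)) : ℂ) ≠ 0 :=
      Complex.ofReal_ne_zero.mpr (by positivity)
    rw [eq_div_iff hden]
    have hW' : ((‖W‖ : ℝ) : ℂ) ≠ 0 := Complex.ofReal_ne_zero.mpr hnW
    have hW'' : ((‖W‖ : ℝ) : ℂ) ≠ 0 := hW'
    have e1' : (starRingEnd ℂ) A * A = ((‖A‖ : ℝ) : ℂ)^2 := e1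
    field_simp [hA, hW'']
    push_cast
    linear_combination (B * ((‖W‖ : ℝ) : ℂ)) * e1'
  have h1 : (starRingEnd ℂ) (Complex.I * (W / (‖W‖ : ℂ))) * C
      = (-Complex.I * (starRingEnd ℂ) W * C) / ((‖W‖ : ℝ) : ℂ) := by
    simp only [map_mul, Complex.conj_I, map_div₀, Complex.conj_ofReal]
    ring
  rw [h1, h2, Complex.div_ofReal_re, Complex.div_ofReal_re]
  have hnA' : ‖A‖ ≠ 0 := hnA
  have hnW'' : ‖W‖ ≠ 0 := hnW
  field_simp

/-- The paper's transformation rule (eqCTransformK) for the curvature of a path under a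
conformal map: `k̃ = (1/|f'|)·(k + Re(−i·(f''/f')·τ))`. -/
theorem stmt6 (φ : ℝ → ℂ) (t : ℝ)
    (hφ : ∀ᶠ s in nhds t, DifferentiableAt ℝ φ s)
    (hφ2 : DifferentiableAt ℝ (deriv φ) t)
    (hφ' : deriv φ t ≠ 0)
    (f : ℂ → ℂ) (hf : AnalyticAt ℂ f (φ t)) (hf' : deriv f (φ t) ≠ 0) :
    curv (f ∘ φ) t =
      (1 / ‖deriv f (φ t)‖) *
        (curv φ t +
          (-Complex.I * (deriv (deriv f) (φ t) / deriv f (φ t)) * unitTangent φ t).re) := by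
  obtain ⟨s, hs_mem, hs⟩ := hf.eventually_analyticAt.exists_mem
  have hφt : DifferentiableAt ℝ φ t := hφ.self_of_nhds
  have hcont : ContinuousAt φ t := hφt.continuousAt
  have hfa : AnalyticOnNhd ℂ f s := fun z hz => hs z hz
  have hdf : AnalyticAt ℂ (deriv f) (φ t) := hfa.deriv (φ t) (mem_of_mem_nhds hs_mem)
  have hev : ∀ᶠ u in nhds t, deriv (f ∘ φ) u = deriv φ u * deriv f (φ u) := by
    filter_upwards [hφ, hcont.preimage_mem_nhds hs_mem] with u hu1 hu2
    exact chain_deriv f φ u ((hs _ hu2).differentiableAt) hu1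
  have h1 : deriv (f ∘ φ) t = deriv φ t * deriv f (φ t) :=
    chain_deriv f φ t hf.differentiableAt hφt
  have hder2 : deriv (deriv (f ∘ φ)) t = deriv (fun u => deriv φ u * deriv f (φ u)) t :=
    Filter.EventuallyEq.deriv_eq hev
  have hdfφ : DifferentiableAt ℝ (fun u => deriv f (φ u)) t :=
    (hdf.differentiableAt.restrictScalars ℝ).comp t hφt
  have hd2 : deriv (fun u => deriv f (φ u)) t = deriv φ t * deriv (deriv f) (φ t) :=
    chain_deriv (deriv f) φ t hdf.differentiableAt hφt
  have h2 : deriv (deriv (f ∘ φ)) t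
      = deriv (deriv φ) t * deriv f (φ t)
        + deriv φ t * (deriv φ t * deriv (deriv f) (φ t)) := by
    rw [hder2, deriv_fun_mul hφ2 hdfφ, hd2]
  -- abbreviations
  set A := deriv f (φ t)
  set W := deriv φ t
  set C := deriv (deriv φ) t
  set B := deriv (deriv f) (φ t)
  have halg := alg A W C B hf' hφ'
  unfold curv unitNormal unitTangent
  rw [h1, h2]
  rw [halg]
end

section
/- Let x ∈ ℂ, let d ≥ 1, let γ₁, …, γ_d be real numbers, and for j = 1, …, d let φⱼ : ℝ → ℂ be twice differentiable at 0 with φⱼ(0) = x and φⱼ'(0) ≠ 0. Let f be holomorphic on a neighbourhood of x with f'(x) ≠ 0. Denote by τⱼ, kⱼ the unit tangents and signed curvatures of the φⱼ at 0, and by τ̃ⱼ, k̃ⱼ those of the image curves f∘φⱼ at 0. Then ( Σⱼ γⱼτⱼ = 0 and Σⱼ γⱼkⱼ = 0 ) if and only if ( Σⱼ γⱼτ̃ⱼ = 0 and Σⱼ γⱼk̃ⱼ = 0 ). (This is the paper's main 2D result: the nodal equilibrium conditions of a two-dimensional foam at a vertex are invariant under conformal maps.) -/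
open Complex Filter

lemma conj_self_eq (a : ℂ) : (starRingEnd ℂ) a * a = ((‖a‖^2 : ℝ) : ℂ) := by
  rw [mul_comm, Complex.mul_conj, Complex.normSq_eq_norm_sq]

/-- derivatives of the composition -/
lemma comp_derivs (x : ℂ) (φ : ℝ → ℂ)
    (hφ : ∀ᶠ s in nhds 0, DifferentiableAt ℝ φ s)
    (hφ2 : DifferentiableAt ℝ (deriv φ) 0)
    (hφ0 : φ 0 = x)
    (f : ℂ → ℂ) (hf : AnalyticAt ℂ f x) :
    deriv (f ∘ φ) 0 = deriv f x * deriv φ 0 ∧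
    deriv (deriv (f ∘ φ)) 0 =
      deriv (deriv f) x * (deriv φ 0)^2 + deriv f x * deriv (deriv φ) 0 := by
  have hφd0 : DifferentiableAt ℝ φ 0 := hφ.self_of_nhds
  have hfa : ∀ᶠ s in nhds (0:ℝ), AnalyticAt ℂ f (φ s) := by
    have := hf.eventually_analyticAt
    have h0 : Filter.Tendsto φ (nhds 0) (nhds x) := by
      simpa [hφ0] using hφd0.continuousAt.tendsto
    exact h0.eventually this
  have hev : ∀ᶠ s in nhds (0:ℝ), deriv (f ∘ φ) s = deriv f (φ s) * deriv φ s := by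
    filter_upwards [hφ, hfa] with s hs hfs
    have h1 : HasDerivAt f (deriv f (φ s)) (φ s) := hfs.differentiableAt.hasDerivAt
    have h2 : HasDerivAt φ (deriv φ s) s := hs.hasDerivAt
    have := h1.scomp s h2
    rw [this.deriv, smul_eq_mul, mul_comm]
  constructor
  · rw [hev.self_of_nhds, hφ0]
  · rw [Filter.EventuallyEq.deriv_eq hev]
    have h1 : HasDerivAt (deriv f) (deriv (deriv f) x) x := by
      obtain ⟨s, hsx, hs⟩ := hf.eventually_analyticAt.exists_mem
      have hAn : AnalyticOnNhd ℂ f (interior s) := fun y hy => hs y (interior_subset hy)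
      have := hAn.deriv x (mem_interior_iff_mem_nhds.2 hsx)
      exact this.differentiableAt.hasDerivAt
    have h2 : HasDerivAt φ (deriv φ 0) 0 := hφ.self_of_nhds.hasDerivAt
    have h3 : HasDerivAt (fun s => deriv f (φ s)) (deriv φ 0 • deriv (deriv f) x) 0 := by
      have := h1.scomp_of_eq 0 h2 hφ0.symm
      exact this
    have h4 : HasDerivAt (deriv φ) (deriv (deriv φ) 0) 0 := hφ2.hasDerivAt
    have h5 := h3.mul h4
    rw [show (fun x => deriv f (φ x) * deriv φ x) = (fun s => deriv f (φ s)) * deriv φ from rfl, h5.deriv, hφ0]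
    simp only [smul_eq_mul]
    ring

/-- tangent transformation -/
lemma tangent_comp (x : ℂ) (φ : ℝ → ℂ)
    (hφ : ∀ᶠ s in nhds 0, DifferentiableAt ℝ φ s)
    (hφ2 : DifferentiableAt ℝ (deriv φ) 0)
    (hφ0 : φ 0 = x)
    (f : ℂ → ℂ) (hf : AnalyticAt ℂ f x) :
    unitTangent (f ∘ φ) 0 = (deriv f x / (‖deriv f x‖ : ℂ)) * unitTangent φ 0 := by
  obtain ⟨h1, -⟩ := comp_derivs x φ hφ hφ2 hφ0 f hf
  unfold unitTangent
  rw [h1, norm_mul]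
  push_cast
  rw [mul_div_mul_comm]

/-- the core algebraic identity for curvature under a conformal map -/
lemma curv_alg (a b c p : ℂ) (ha : a ≠ 0) (hb : b ≠ 0) :
    ((starRingEnd ℂ) (Complex.I * (a * b / ((‖a‖ * ‖b‖ : ℝ) : ℂ))) * (c * b^2 + a * p)).re
      / (‖a‖ * ‖b‖) ^ 2
    = ((starRingEnd ℂ) (Complex.I * (b / ((‖b‖ : ℝ) : ℂ))) * p).re / ‖b‖ ^ 2 / ‖a‖
      + ((starRingEnd ℂ) Complex.I * (starRingEnd ℂ) a * c * (b / ((‖b‖ : ℝ) : ℂ))).re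
        / ‖a‖ ^ 3 := by
  have hna : (0:ℝ) < ‖a‖ := norm_pos_iff.2 ha
  have hnb : (0:ℝ) < ‖b‖ := norm_pos_iff.2 hb
  set X : ℂ := (starRingEnd ℂ) Complex.I * (starRingEnd ℂ) a * c * b with hX
  set Y : ℂ := (starRingEnd ℂ) Complex.I * (starRingEnd ℂ) b * p with hY
  have e0 : (starRingEnd ℂ) (Complex.I * a * b) * (c * b^2 + a * p)
      = X * ((starRingEnd ℂ) b * b) + Y * ((starRingEnd ℂ) a * a) := by
    simp only [map_mul, hX, hY]; ring
  have e1 : (starRingEnd ℂ) (Complex.I * (a * b / ((‖a‖ * ‖b‖ : ℝ) : ℂ))) * (c * b^2 + a * p)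
      = (X * ((‖b‖^2 : ℝ) : ℂ) + Y * ((‖a‖^2 : ℝ) : ℂ)) / ((‖a‖ * ‖b‖ : ℝ) : ℂ) := by
    rw [← conj_self_eq, ← conj_self_eq, ← e0]
    simp only [map_mul, map_div₀, Complex.conj_ofReal]
    ring
  have e2 : (starRingEnd ℂ) (Complex.I * (b / ((‖b‖ : ℝ) : ℂ))) * p
      = Y / ((‖b‖ : ℝ) : ℂ) := by
    simp only [map_mul, map_div₀, Complex.conj_ofReal, hY]; ring
  have e3 : (starRingEnd ℂ) Complex.I * (starRingEnd ℂ) a * c * (b / ((‖b‖ : ℝ) : ℂ))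
      = X / ((‖b‖ : ℝ) : ℂ) := by
    rw [hX]; ring
  rw [e1, e2, e3]
  simp only [Complex.div_ofReal_re, Complex.add_re]
  have hXr : (X * ((‖b‖^2 : ℝ) : ℂ)).re = X.re * ‖b‖^2 := by
    rw [mul_comm, Complex.re_ofReal_mul, mul_comm]
  have hYr : (Y * ((‖a‖^2 : ℝ) : ℂ)).re = Y.re * ‖a‖^2 := by
    rw [mul_comm, Complex.re_ofReal_mul, mul_comm]
  rw [hXr, hYr]
  have h1 : ‖a‖ ≠ 0 := norm_ne_zero_iff.mpr ha
  have h2 : ‖b‖ ≠ 0 := norm_ne_zero_iff.mpr hb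
  field_simp
  ring

/-- curvature transformation -/
lemma curv_comp (x : ℂ) (φ : ℝ → ℂ)
    (hφ : ∀ᶠ s in nhds 0, DifferentiableAt ℝ φ s)
    (hφ2 : DifferentiableAt ℝ (deriv φ) 0)
    (hφ0 : φ 0 = x)
    (hφ' : deriv φ 0 ≠ 0)
    (f : ℂ → ℂ) (hf : AnalyticAt ℂ f x) (hf' : deriv f x ≠ 0) :
    curv (f ∘ φ) 0 = curv φ 0 / ‖deriv f x‖
      + ((starRingEnd ℂ) Complex.I * (starRingEnd ℂ) (deriv f x) * deriv (deriv f) x *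
          unitTangent φ 0).re / ‖deriv f x‖ ^ 3 := by
  obtain ⟨h1, h2⟩ := comp_derivs x φ hφ hφ2 hφ0 f hf
  unfold curv unitNormal unitTangent
  rw [h1, h2, norm_mul]
  have := curv_alg (deriv f x) (deriv φ 0) (deriv (deriv f) x) (deriv (deriv φ) 0) hf' hφ'
  push_cast at this ⊢
  convert this using 4

/-- Conformal invariance of nodal equilibrium of two-dimensional foams: at a vertex `x`
where `d` edges `φⱼ` with line tensions `γⱼ` meet, the equilibrium conditions
`∑ γⱼτⱼ = 0` and `∑ γⱼkⱼ = 0` hold for the image foam under a conformal map `f`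
if and only if they hold for the original one. -/
theorem stmt7 (x : ℂ) (d : ℕ) (hd : 1 ≤ d) (γ : Fin d → ℝ) (φ : Fin d → ℝ → ℂ)
    (hφ : ∀ j, ∀ᶠ s in nhds 0, DifferentiableAt ℝ (φ j) s)
    (hφ2 : ∀ j, DifferentiableAt ℝ (deriv (φ j)) 0)
    (hφ0 : ∀ j, φ j 0 = x)
    (hφ' : ∀ j, deriv (φ j) 0 ≠ 0)
    (f : ℂ → ℂ) (hf : AnalyticAt ℂ f x) (hf' : deriv f x ≠ 0) :
    ((∑ j, (γ j : ℂ) * unitTangent (φ j) 0 = 0) ∧ (∑ j, γ j * curv (φ j) 0 = 0)) ↔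
    ((∑ j, (γ j : ℂ) * unitTangent (f ∘ φ j) 0 = 0) ∧
      (∑ j, γ j * curv (f ∘ φ j) 0 = 0)) := by
  set a := deriv f x with ha
  set u : ℂ := a / (‖a‖ : ℂ) with hu
  have hna : (0:ℝ) < ‖a‖ := norm_pos_iff.2 hf'
  have hu0 : u ≠ 0 := by
    rw [hu]
    exact div_ne_zero hf' (by exact_mod_cast hna.ne')
  set w : ℂ := (starRingEnd ℂ) Complex.I * (starRingEnd ℂ) a * deriv (deriv f) x with hw
  -- sums
  have hT : ∑ j, (γ j : ℂ) * unitTangent (f ∘ φ j) 0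
      = u * ∑ j, (γ j : ℂ) * unitTangent (φ j) 0 := by
    rw [Finset.mul_sum]
    refine Finset.sum_congr rfl fun j _ => ?_
    rw [tangent_comp x (φ j) (hφ j) (hφ2 j) (hφ0 j) f hf]
    ring
  have hK : ∑ j, γ j * curv (f ∘ φ j) 0
      = (∑ j, γ j * curv (φ j) 0) / ‖a‖
        + (w * ∑ j, (γ j : ℂ) * unitTangent (φ j) 0).re / ‖a‖ ^ 3 := by
    have hre : (w * ∑ j, (γ j : ℂ) * unitTangent (φ j) 0).re
        = ∑ j, (w * ((γ j : ℂ) * unitTangent (φ j) 0)).re := by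
      rw [Finset.mul_sum, Complex.re_sum]
    rw [hre, Finset.sum_div, Finset.sum_div, ← Finset.sum_add_distrib]
    refine Finset.sum_congr rfl fun j _ => ?_
    rw [curv_comp x (φ j) (hφ j) (hφ2 j) (hφ0 j) (hφ' j) f hf hf']
    have : (w * ((γ j : ℂ) * unitTangent (φ j) 0)).re
        = γ j * (w * unitTangent (φ j) 0).re := by
      rw [show w * ((γ j : ℂ) * unitTangent (φ j) 0)
          = (γ j : ℂ) * (w * unitTangent (φ j) 0) by ring, Complex.re_ofReal_mul]
    rw [this, hw]
    ring
  constructor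
  · rintro ⟨h1, h2⟩
    refine ⟨by rw [hT, h1, mul_zero], ?_⟩
    rw [hK, h1, h2, mul_zero, Complex.zero_re, zero_div, zero_div, add_zero]
  · rintro ⟨h1, h2⟩
    have hA : ∑ j, (γ j : ℂ) * unitTangent (φ j) 0 = 0 := by
      rw [hT] at h1
      rcases mul_eq_zero.1 h1 with h | h
      · exact absurd h hu0
      · exact h
    refine ⟨hA, ?_⟩
    rw [hK, hA, mul_zero, Complex.zero_re, zero_div, add_zero] at h2
    have := (div_eq_zero_iff.1 h2)
    rcases this with h | h
    · exact h
    · exact absurd h hna.ne'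
end

section
/- Let φ : ℝ → ℂ be twice differentiable at t with φ'(t) ≠ 0, and let f be holomorphic on a neighbourhood of φ(t) with f'(φ(t)) ≠ 0. Then the signed curvature k of φ can be recovered from the signed curvature k̃ of the image curve f∘φ by k(t) = |f'(φ(t))|·k̃(t) + Re( n(t)·(f''(φ(t))/f'(φ(t))) ), where n(t) = i·φ'(t)/|φ'(t)| is the unit normal of φ. (This is the paper's formula (eqkn): k = |f'|·k̃ + Re[n·(ln f')'].) -/
open Complex in
lemma stmt8_key (a b p q : ℂ) (na np : ℝ) (hna : 0 < na) (hnp : 0 < np)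
    (hA : (starRingEnd ℂ) a * a = (na:ℂ)^2) (hP : (starRingEnd ℂ) p * p = (np:ℂ)^2) :
    ((starRingEnd ℂ) (Complex.I * (p / (np:ℂ))) * q).re / np^2
    = na * (((starRingEnd ℂ) (Complex.I * (a*p / ((na*np : ℝ):ℂ))) * (b*p*p + a*q)).re / (na*np)^2)
      + (Complex.I * (p/(np:ℂ)) * (b/a)).re := by
  have hna0 : (na:ℂ) ≠ 0 := by exact_mod_cast hna.ne'
  have hnp0 : (np:ℂ) ≠ 0 := by exact_mod_cast hnp.ne'
  have ha : a ≠ 0 := by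
    rintro rfl
    rw [map_zero, zero_mul] at hA
    exact hna0 (by simpa using pow_eq_zero_iff (n := 2) (by norm_num) |>.mp hA.symm)
  set X := (starRingEnd ℂ) (I*p) * q with hX
  set Z := I*p*(b*(starRingEnd ℂ) a) with hZ
  have hW : (starRingEnd ℂ) (I*a*p) * (b*p*p + a*q) = (na:ℂ)^2 * X - (np:ℂ)^2 * Z := by
    simp only [hX, hZ, map_mul, Complex.conj_I]
    linear_combination (-Complex.I * (starRingEnd ℂ) a * b * p) * hP +
      (-Complex.I * (starRingEnd ℂ) p * q) * hA
  have e1 : (starRingEnd ℂ) (Complex.I * (p / (np:ℂ))) * q = X / (np:ℂ) := by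
    rw [hX]; simp only [map_mul, map_div₀, Complex.conj_ofReal]; ring
  have e2 : (starRingEnd ℂ) (Complex.I * (a*p / ((na*np : ℝ):ℂ))) * (b*p*p + a*q)
      = ((na:ℂ)^2 * X - (np:ℂ)^2 * Z) / ((na*np : ℝ):ℂ) := by
    rw [← hW]
    rw [map_mul, map_div₀, map_mul]
    simp [Complex.conj_ofReal]
    ring
  have e3 : Complex.I * (p/(np:ℂ)) * (b/a) = Z / ((np * na^2 : ℝ):ℂ) := by
    rw [hZ]
    push_cast
    field_simp
    linear_combination (-p * b) * hA
  rw [e1, e2, e3, Complex.div_ofReal_re, Complex.div_ofReal_re, Complex.div_ofReal_re]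
  have hre : ((na:ℂ)^2 * X - (np:ℂ)^2 * Z).re = na^2 * X.re - np^2 * Z.re := by
    rw [Complex.sub_re, ← Complex.ofReal_pow, ← Complex.ofReal_pow,
      Complex.re_ofReal_mul, Complex.re_ofReal_mul]
  rw [hre]
  field_simp
  ring

/-- The paper's formula (eqkn): the signed curvature of `φ` is recovered from that of the
image curve `f∘φ` by `k = |f'|·k̃ + Re[n·(ln f')'] = |f'|·k̃ + Re[n·(f''/f')]`. -/
theorem stmt8 (φ : ℝ → ℂ) (t : ℝ)
    (hφ : ∀ᶠ s in nhds t, DifferentiableAt ℝ φ s)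
    (hφ2 : DifferentiableAt ℝ (deriv φ) t)
    (hφ' : deriv φ t ≠ 0)
    (f : ℂ → ℂ) (hf : AnalyticAt ℂ f (φ t)) (hf' : deriv f (φ t) ≠ 0) :
    curv φ t =
      ‖deriv f (φ t)‖ * curv (f ∘ φ) t +
        (unitNormal φ t * (deriv (deriv f) (φ t) / deriv f (φ t))).re := by
  have hφt : DifferentiableAt ℝ φ t := hφ.self_of_nhds
  -- deriv f is differentiable at φ t
  have hdf : DifferentiableAt ℂ (deriv f) (φ t) := by
    have h1 : DifferentiableAt ℂ (fderiv ℂ f) (φ t) := hf.fderiv.differentiableAt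
    have h2 : DifferentiableAt ℂ (fun z => fderiv ℂ f z 1) (φ t) :=
      h1.clm_apply (differentiableAt_const (1:ℂ))
    exact h2
  -- first derivative of f ∘ φ, eventually
  have hev : ∀ᶠ s in nhds t, deriv (f ∘ φ) s = deriv f (φ s) * deriv φ s := by
    have hcont : Filter.Tendsto φ (nhds t) (nhds (φ t)) := hφt.continuousAt
    filter_upwards [hφ, hcont.eventually hf.eventually_analyticAt] with s hs hfs
    exact (HasDerivAt.comp s hfs.differentiableAt.hasDerivAt hs.hasDerivAt).deriv
  have hD1 : deriv (f ∘ φ) t = deriv f (φ t) * deriv φ t := hev.self_of_nhds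
  -- second derivative of f ∘ φ
  have hMul : HasDerivAt (fun s => deriv f (φ s) * deriv φ s)
      (deriv (deriv f) (φ t) * deriv φ t * deriv φ t + deriv f (φ t) * deriv (deriv φ) t) t := by
    have hA : HasDerivAt (fun s => deriv f (φ s)) (deriv (deriv f) (φ t) * deriv φ t) t :=
      HasDerivAt.comp t hdf.hasDerivAt hφt.hasDerivAt
    exact hA.mul hφ2.hasDerivAt
  have hD2 : deriv (deriv (f ∘ φ)) t
      = deriv (deriv f) (φ t) * deriv φ t * deriv φ t + deriv f (φ t) * deriv (deriv φ) t := by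
    rw [Filter.EventuallyEq.deriv_eq hev]
    exact hMul.deriv
  -- norms
  have hna : (0:ℝ) < ‖deriv f (φ t)‖ := norm_pos_iff.mpr hf'
  have hnp : (0:ℝ) < ‖deriv φ t‖ := norm_pos_iff.mpr hφ'
  have hA : (starRingEnd ℂ) (deriv f (φ t)) * deriv f (φ t) = ((‖deriv f (φ t)‖ : ℝ):ℂ)^2 := by
    rw [mul_comm, Complex.mul_conj, Complex.normSq_eq_norm_sq]
    push_cast; ring
  have hP : (starRingEnd ℂ) (deriv φ t) * deriv φ t = ((‖deriv φ t‖ : ℝ):ℂ)^2 := by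
    rw [mul_comm, Complex.mul_conj, Complex.normSq_eq_norm_sq]
    push_cast; ring
  simp only [curv, unitNormal, unitTangent]
  rw [hD1, hD2, norm_mul]
  exact stmt8_key (deriv f (φ t)) (deriv (deriv f) (φ t)) (deriv φ t) (deriv (deriv φ) t)
    _ _ hna hnp hA hP
end

section
/- Let U ⊆ ℂ be open and connected, let f be holomorphic on U with f'(z) ≠ 0 for all z ∈ U, and let h : ℂ → ℝ be positive on U and differentiable in the real sense on U. Suppose that for every z ∈ U and every v ∈ ℂ the real differential of log h satisfies d(log h)_z(v) = Re( (f''(z)/f'(z))·v ). Then there exists a constant h₀ > 0 such that h(z) = h₀·|f'(z)| for all z ∈ U. (This is the paper's constant-pressure solution (eqSolMin) of the map–profile equation: the plate profile h is proportional to |f'|.) -/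
open Complex

private lemma inner_complex_real (x y : ℂ) :
    @inner ℝ ℂ _ x y = ((starRingEnd ℂ) x * y).re := by
  rw [real_inner_eq_re_inner (𝕜 := ℂ), RCLike.inner_apply']; rfl

/-- The real differential of `log ∘ abs ∘ g` at a point where `g` is complex-differentiable
and nonvanishing. -/
private lemma logabs_fderiv {g : ℂ → ℂ} {z g' : ℂ} (hg : HasDerivAt g g' z) (hz : g z ≠ 0) :
    ∃ L : ℂ →L[ℝ] ℝ, HasFDerivAt (fun w => Real.log ‖g w‖) L z ∧
      ∀ v : ℂ, L v = (g' / g z * v).re := by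
  have hgg : HasFDerivAt g
      ((ContinuousLinearMap.smulRight (1 : ℂ →L[ℂ] ℂ) g').restrictScalars ℝ) z :=
    hg.hasFDerivAt.restrictScalars ℝ
  have h1 := hgg.norm_sq
  have hne : ‖g z‖ ^ 2 ≠ 0 := by
    simpa using hz
  have h2 := (h1.log hne).const_smul (2 : ℝ)⁻¹
  refine ⟨(2:ℝ)⁻¹ • (‖g z‖ ^ 2)⁻¹ •
      (2 • ((innerSL ℝ) (g z)).comp
        (ContinuousLinearMap.restrictScalars ℝ (ContinuousLinearMap.smulRight (1 : ℂ →L[ℂ] ℂ) g'))), ?_, ?_⟩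
  · have hfun : (fun w => Real.log ‖g w‖)
        = fun x => (2:ℝ)⁻¹ • Real.log (‖g x‖ ^ 2) := by
      funext w
      rw [Real.log_pow, smul_eq_mul]
      push_cast
      ring
    rw [hfun]
    exact h2
  · intro v
    have habs : ‖g z‖ ≠ 0 := norm_ne_zero_iff.2 hz
    have hns : ((‖g z‖ ^ 2 : ℝ) : ℂ) = g z * (starRingEnd ℂ) (g z) := by
      rw [Complex.mul_conj, Complex.normSq_eq_norm_sq]
      try push_cast
      try ring
    have hconj : (starRingEnd ℂ) (g z) ≠ 0 := by
      simpa using hz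
    have key : g' / g z * v = (starRingEnd ℂ) (g z) * (v * g') / ((‖g z‖ ^ 2 : ℝ) : ℂ) := by
      rw [hns]
      field_simp
      try ring
    rw [key, Complex.div_ofReal_re]
    simp only [ContinuousLinearMap.smul_apply, ContinuousLinearMap.comp_apply, innerSL_apply_apply,
      ContinuousLinearMap.coe_restrictScalars', ContinuousLinearMap.smulRight_apply,
      ContinuousLinearMap.one_apply, smul_eq_mul, nsmul_eq_mul, inner_complex_real,
      Nat.cast_ofNat]
    field_simp
    try ring

/-- The paper's constant-pressure solution (eqSolMin) of the map–profile equation: if on an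
open connected set `U` the positive, real-differentiable profile `h` satisfies
`d(log h)_z(v) = Re((f''(z)/f'(z))·v)` for a holomorphic `f` with nonvanishing derivative,
then `h = h₀·|f'|` for some constant `h₀ > 0`. -/
theorem stmt10 (U : Set ℂ) (hUopen : IsOpen U) (hUconn : IsConnected U)
    (f : ℂ → ℂ) (hf : DifferentiableOn ℂ f U) (hf' : ∀ z ∈ U, deriv f z ≠ 0)
    (h : ℂ → ℝ) (hpos : ∀ z ∈ U, 0 < h z) (hdiff : ∀ z ∈ U, DifferentiableAt ℝ h z)
    (heq : ∀ z ∈ U, ∃ L : ℂ →L[ℝ] ℝ,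
      HasFDerivAt (fun w => Real.log (h w)) L z ∧
      ∀ v : ℂ, L v = ((deriv (deriv f) z / deriv f z) * v).re) :
    ∃ h₀ : ℝ, 0 < h₀ ∧ ∀ z ∈ U, h z = h₀ * ‖deriv f z‖ := by
  -- the derivative of f is analytic on U
  have hfa : AnalyticOnNhd ℂ (deriv f) U := AnalyticOnNhd.deriv (hf.analyticOnNhd hUopen)
  -- the difference F := log h - log |f'| has zero derivative on U
  set F : ℂ → ℝ := fun w => Real.log (h w) - Real.log ‖deriv f w‖ with hF
  have hF0 : ∀ z ∈ U, HasFDerivAt F (0 : ℂ →L[ℝ] ℝ) z := by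
    intro z hz
    obtain ⟨L₁, hL₁, hL₁v⟩ := heq z hz
    have hgz : HasDerivAt (deriv f) (deriv (deriv f) z) z :=
      ((hfa z hz).differentiableAt.hasDerivAt)
    obtain ⟨L₂, hL₂, hL₂v⟩ := logabs_fderiv hgz (hf' z hz)
    have hLL : L₁ = L₂ := by
      ext v
      rw [hL₁v, hL₂v]
    have := hL₁.sub hL₂
    rwa [hLL, sub_self] at this
  -- F is locally constant on U
  have hloc : ∀ z ∈ U, ∃ ε > 0, Metric.ball z ε ⊆ U ∧
      ∀ y ∈ Metric.ball z ε, F y = F z := by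
    intro z hz
    obtain ⟨ε, hε, hball⟩ := Metric.isOpen_iff.1 hUopen z hz
    refine ⟨ε, hε, hball, fun y hy => ?_⟩
    have hd : ∀ x ∈ Metric.ball z ε, HasFDerivWithinAt F 0 (Metric.ball z ε) x :=
      fun x hx => (hF0 x (hball hx)).hasFDerivWithinAt
    have := (convex_ball z ε).norm_image_sub_le_of_norm_hasFDerivWithin_le (C := 0)
      hd (fun x _ => by simp) (Metric.mem_ball_self hε) hy
    have h0 : ‖F y - F z‖ ≤ 0 := by simpa using this
    have h1 := le_antisymm h0 (norm_nonneg _)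
    rwa [norm_eq_zero, sub_eq_zero] at h1
  obtain ⟨z₀, hz₀⟩ := hUconn.nonempty
  -- the sets where F = F z₀ and F ≠ F z₀ are both open
  set S : Set ℂ := {z ∈ U | F z = F z₀} with hS
  set T : Set ℂ := {z ∈ U | F z ≠ F z₀} with hT
  have hSopen : IsOpen S := by
    rw [Metric.isOpen_iff]
    intro z hz
    obtain ⟨ε, hε, hball, hconst⟩ := hloc z hz.1
    exact ⟨ε, hε, fun y hy => ⟨hball hy, (hconst y hy).trans hz.2⟩⟩
  have hTopen : IsOpen T := by
    rw [Metric.isOpen_iff]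
    intro z hz
    obtain ⟨ε, hε, hball, hconst⟩ := hloc z hz.1
    exact ⟨ε, hε, fun y hy => ⟨hball hy, (hconst y hy).symm ▸ hz.2⟩⟩
  have hUS : ∀ z ∈ U, F z = F z₀ := by
    by_contra hcon
    push_neg at hcon
    obtain ⟨z₁, hz₁, hz₁'⟩ := hcon
    have := hUconn.isPreconnected S T hSopen hTopen
      (fun z hz => by by_cases hc : F z = F z₀ <;> [exact Or.inl ⟨hz, hc⟩; exact Or.inr ⟨hz, hc⟩])
      ⟨z₀, hz₀, hz₀, rfl⟩ ⟨z₁, hz₁, hz₁, hz₁'⟩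
    obtain ⟨w, -, hw1, hw2⟩ := this
    exact hw2.2 hw1.2
  -- conclude
  refine ⟨Real.exp (F z₀), Real.exp_pos _, fun z hz => ?_⟩
  have habs : (0:ℝ) < ‖deriv f z‖ :=
    norm_pos_iff.2 (hf' z hz)
  have hFz := hUS z hz
  have : Real.log (h z) = F z₀ + Real.log ‖deriv f z‖ := by
    rw [← hFz]; simp [hF]
  calc h z = Real.exp (Real.log (h z)) := (Real.exp_log (hpos z hz)).symm
    _ = Real.exp (F z₀) * ‖deriv f z‖ := by
        rw [this, Real.exp_add, Real.exp_log habs]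
end

section
/- Let a ∈ ℂ, a ≠ 0, let f(z) = (1/conj(a))·exp(conj(a)·z), and let φ : ℝ → ℂ be twice differentiable at t with φ'(t) ≠ 0. Then the signed curvature k of φ and the signed curvature k̃ of the image curve f∘φ satisfy exactly k(t) = |a|·|f(φ(t))|·k̃(t) + Re( conj(a)·n(t) ), where n(t) = i·φ'(t)/|φ'(t)| is the unit normal of φ. (This is the paper's formula (eqLogk): under the exponential map, edges parallel to a are deformed only by similarity while edges perpendicular to a acquire curvature a·n.) -/
lemma key (c p q E : ℂ) (hp : p ≠ 0) (hE : E ≠ 0) :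
    ((starRingEnd ℂ) (Complex.I * (p / (‖p‖:ℂ))) * q).re / ‖p‖ ^ 2 =
    ‖E‖ *
      (((starRingEnd ℂ) (Complex.I * (E * p / (‖E * p‖:ℂ))) * (c * p * (E * p) + E * q)).re /
        ‖E * p‖ ^ 2) +
    (c * (Complex.I * (p / (‖p‖:ℂ)))).re := by
  set r : ℝ := ‖p‖ with hrdef
  set s : ℝ := ‖E‖ with hsdef
  have hr : (0:ℝ) < r := norm_pos_iff.mpr hp
  have hs : (0:ℝ) < s := norm_pos_iff.mpr hE
  have e1 : (starRingEnd ℂ) E * E = ((s:ℂ))^2 := by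
    rw [mul_comm, Complex.mul_conj, ← Complex.sq_norm]; push_cast; ring
  have e2 : (starRingEnd ℂ) p * p = ((r:ℂ))^2 := by
    rw [mul_comm, Complex.mul_conj, ← Complex.sq_norm, hrdef]
    push_cast; ring
  have hnorm : ‖E * p‖ = s * r := by rw [norm_mul]
  rw [hnorm]
  have hL : (starRingEnd ℂ) (Complex.I * (p / (r:ℂ))) * q =
      ((r⁻¹ : ℝ) : ℂ) * (-Complex.I * (starRingEnd ℂ) p * q) := by
    simp only [map_mul, map_div₀, Complex.conj_I, Complex.conj_ofReal]
    push_cast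
    field_simp
  have hR : (starRingEnd ℂ) (Complex.I * (E * p / ((s*r : ℝ):ℂ))) * (c * p * (E * p) + E * q) =
      (((s*r)⁻¹ * s^2 : ℝ) : ℂ) *
        ((-Complex.I * (starRingEnd ℂ) p * q) + ((r : ℝ):ℂ)^2 * (-Complex.I * (c * p))) := by
    simp only [map_mul, map_div₀, Complex.conj_I, Complex.conj_ofReal]
    push_cast
    linear_combination (((s:ℂ)*r)⁻¹ * (-Complex.I) *
        (c*p*((starRingEnd ℂ) p)*p + (starRingEnd ℂ) p * q)) * e1 +
      (-((s:ℂ)*r)⁻¹ * Complex.I * (s:ℂ)^2 * c * p) * e2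
  have hT : c * (Complex.I * (p / (r:ℂ))) = ((r⁻¹ : ℝ):ℂ) * (Complex.I * (c * p)) := by
    push_cast; field_simp
  rw [hL, hR, hT]
  simp only [Complex.re_ofReal_mul, Complex.add_re]
  have : (((r:ℝ):ℂ)^2 * (-Complex.I * (c * p))).re = r^2 * (-Complex.I * (c * p)).re := by
    rw [← Complex.ofReal_pow, Complex.re_ofReal_mul]
  rw [this]
  field_simp
  simp only [Complex.neg_re]; ring


/-- The paper's formula (eqLogk): under the exponential map `f(z) = (1/conj a)·exp(conj a·z)`
the curvatures of a curve `φ` and its image `f∘φ` satisfy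
`k = |a|·|f(φ(t))|·k̃ + Re(conj(a)·n)`. -/
theorem stmt12 (a : ℂ) (ha : a ≠ 0) (f : ℂ → ℂ)
    (hfdef : ∀ z, f z = (1 / (starRingEnd ℂ) a) * Complex.exp ((starRingEnd ℂ) a * z))
    (φ : ℝ → ℂ) (t : ℝ)
    (hφ : ∀ᶠ s in nhds t, DifferentiableAt ℝ φ s)
    (hφ2 : DifferentiableAt ℝ (deriv φ) t)
    (hφ' : deriv φ t ≠ 0) :
    curv φ t =
      ‖a‖ * ‖f (φ t)‖ * curv (f ∘ φ) t +
        ((starRingEnd ℂ) a * unitNormal φ t).re := by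
  have hf : f = fun z => (1 / (starRingEnd ℂ) a) * Complex.exp ((starRingEnd ℂ) a * z) :=
    funext hfdef
  subst hf
  set c := (starRingEnd ℂ) a with hc
  have hc0 : c ≠ 0 := by simpa [hc] using ha
  set E := Complex.exp (c * φ t) with hE
  have hE0 : E ≠ 0 := Complex.exp_ne_zero _
  have hD : ∀ s : ℝ, DifferentiableAt ℝ φ s →
      HasDerivAt ((fun z => (1/c) * Complex.exp (c*z)) ∘ φ)
        (Complex.exp (c * φ s) * deriv φ s) s := by
    intro s hs
    have h1 : HasDerivAt (fun u : ℝ => c * φ u) (c * deriv φ s) s :=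
      (hs.hasDerivAt).const_mul c
    have h2 := h1.cexp
    have h3 := h2.const_mul (1/c)
    refine h3.congr_deriv ?_
    field_simp
  have hEv : deriv ((fun z => (1/c) * Complex.exp (c*z)) ∘ φ) =ᶠ[nhds t]
      fun s => Complex.exp (c * φ s) * deriv φ s := by
    filter_upwards [hφ] with s hs using (hD s hs).deriv
  have hd1 : deriv ((fun z => (1/c) * Complex.exp (c*z)) ∘ φ) t = E * deriv φ t :=
    (hD t hφ.self_of_nhds).deriv
  have hdφ : HasDerivAt φ (deriv φ t) t := hφ.self_of_nhds.hasDerivAt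
  have hdE : HasDerivAt (fun s => Complex.exp (c * φ s)) (E * (c * deriv φ t)) t :=
    (hdφ.const_mul c).cexp
  have hprod : HasDerivAt (fun s => Complex.exp (c*φ s) * deriv φ s)
      (c * deriv φ t * (E * deriv φ t) + E * deriv (deriv φ) t) t := by
    have := hdE.mul hφ2.hasDerivAt
    refine this.congr_deriv ?_
    rw [← hE]; ring
  have hd2 : deriv (deriv ((fun z => (1/c) * Complex.exp (c*z)) ∘ φ)) t =
      c * deriv φ t * (E * deriv φ t) + E * deriv (deriv φ) t := by
    rw [hEv.deriv_eq]
    exact hprod.deriv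
  have habs : ‖a‖ * ‖(1/c) * Complex.exp (c * φ t)‖ = ‖E‖ := by
    rw [norm_mul, norm_div, norm_one, hc, Complex.norm_conj, ← hE]
    field_simp [norm_ne_zero_iff.mpr ha]
  simp only [curv, unitNormal, unitTangent]
  rw [hd1, hd2]
  rw [show ‖a‖ * ‖(fun z => (1/c) * Complex.exp (c*z)) (φ t)‖ =
      ‖E‖ from habs]
  exact key c (deriv φ t) (deriv (deriv φ) t) E hφ' hE0
end

section
/- Let f be holomorphic on a neighbourhood of φ(t) with f'(φ(t)) ≠ 0, let φ : ℝ → ℂ be twice differentiable at t with φ'(t) ≠ 0, and suppose the image curve f∘φ has signed curvature k̃(t) = 0 (constant-pressure reference). Let h₀ > 0 and let the plate profile be the constant-volume one, h(w) = h₀·|f'(w)|², and define the vertical film curvature k_v(t) = −d(log h)_{φ(t)}(n(t)), where n(t) = i·φ'(t)/|φ'(t)| is the unit normal of φ. Then k_v(t) = −2·k(t), and hence k(t) + k_v(t) = −k(t), where k is the signed curvature of φ. (This is the paper's result (eqAntiLaplace): under volume conservation the pressure difference (P₁−P₂)/γ = k + k_v is the opposite of what a direct 2D readout of the projected curvature k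 would predict.) -/
lemma curv_eq (φ : ℝ → ℂ) (t : ℝ) :
    curv φ t = ((starRingEnd ℂ) (deriv φ t) * deriv (deriv φ) t).im / ‖deriv φ t‖ ^ 3 := by
  unfold curv unitNormal unitTangent
  set a := deriv φ t
  set b := deriv (deriv φ) t
  rcases eq_or_ne a 0 with h | h
  · simp [h]
  · have hA : (0:ℝ) < ‖a‖ := norm_pos_iff.mpr h
    field_simp
    rw [div_eq_mul_inv, ← Complex.ofReal_inv]
    simp only [map_mul, Complex.conj_ofReal, Complex.conj_I, Complex.mul_re, Complex.mul_im,
      Complex.ofReal_re, Complex.ofReal_im, Complex.conj_re, Complex.conj_im, Complex.I_re,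
      Complex.I_im, Complex.neg_re, Complex.neg_im]
    field_simp
    ring

lemma hasFDerivAt_normSq (z : ℂ) :
    HasFDerivAt Complex.normSq
      ((2*z.re) • Complex.reCLM + (2*z.im) • Complex.imCLM) z := by
  have h1 : HasFDerivAt (fun w : ℂ => w.re * w.re + w.im * w.im)
      ((z.re • (Complex.reCLM : ℂ →L[ℝ] ℝ) + z.re • Complex.reCLM) +
       (z.im • (Complex.imCLM : ℂ →L[ℝ] ℝ) + z.im • Complex.imCLM)) z :=
    ((Complex.reCLM.hasFDerivAt.mul Complex.reCLM.hasFDerivAt).add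
      (Complex.imCLM.hasFDerivAt.mul Complex.imCLM.hasFDerivAt))
  have hfun : Complex.normSq = fun w : ℂ => w.re * w.re + w.im * w.im := by
    funext w; simp [Complex.normSq_apply]
  rw [hfun]
  convert h1 using 1
  ext v <;> simp <;> ring

/-- The paper's result (eqAntiLaplace): for a constant-pressure reference (`k̃ = 0`) and the
constant-volume profile `h = h₀·|f'|²`, the vertical film curvature
`k_v = −d(log h)(n)` satisfies `k_v = −2k`, hence `k + k_v = −k`: the pressure difference
is the opposite of what a direct 2D readout of the projected curvature would predict. -/
theorem stmt14 (φ : ℝ → ℂ) (t : ℝ)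
    (hφ : ∀ᶠ s in nhds t, DifferentiableAt ℝ φ s)
    (hφ2 : DifferentiableAt ℝ (deriv φ) t)
    (hφ' : deriv φ t ≠ 0)
    (f : ℂ → ℂ) (hf : AnalyticAt ℂ f (φ t)) (hf' : deriv f (φ t) ≠ 0)
    (href : curv (f ∘ φ) t = 0)
    (h₀ : ℝ) (hh₀ : 0 < h₀)
    (L : ℂ →L[ℝ] ℝ)
    (hL : HasFDerivAt (fun w : ℂ => Real.log (h₀ * ‖deriv f w‖ ^ 2)) L (φ t))
    (kv : ℝ) (hkv : kv = -L (unitNormal φ t)) :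
    kv = -2 * curv φ t ∧ curv φ t + kv = -(curv φ t) := by
  -- notation
  set z := φ t with hz
  set g := deriv f with hgdef
  -- analyticity of g = deriv f at z
  have hga : AnalyticAt ℂ g z := by
    have h1 := hf.fderiv
    exact ((ContinuousLinearMap.apply ℂ ℂ (1:ℂ)).analyticAt _).comp h1
  have hgd : DifferentiableAt ℂ g z := hga.differentiableAt
  set a := deriv φ t with ha
  set b := deriv (deriv φ) t with hb
  set c := g z with hc
  set d := deriv g z with hd
  -- Step 1: identify L explicitly
  have hGf : HasFDerivAt g ((ContinuousLinearMap.smulRight (1 : ℂ →L[ℂ] ℂ) d).restrictScalars ℝ) z :=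
    (hgd.hasDerivAt.hasFDerivAt).restrictScalars ℝ
  have hN : HasFDerivAt (fun w => Complex.normSq (g w))
      (((2*c.re) • Complex.reCLM + (2*c.im) • Complex.imCLM).comp
        ((ContinuousLinearMap.smulRight (1 : ℂ →L[ℂ] ℂ) d).restrictScalars ℝ)) z :=
    (hasFDerivAt_normSq c).comp z hGf
  have hcns : (0:ℝ) < Complex.normSq c := Complex.normSq_pos.mpr hf'
  have hlog : HasFDerivAt (fun w => Real.log (Complex.normSq (g w)))
      ((Complex.normSq c)⁻¹ •
        (((2*c.re) • Complex.reCLM + (2*c.im) • Complex.imCLM).comp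
          ((ContinuousLinearMap.smulRight (1 : ℂ →L[ℂ] ℂ) d).restrictScalars ℝ))) z :=
    by have := (Real.hasDerivAt_log hcns.ne').comp_hasFDerivAt z hN; exact this
  have hfull : HasFDerivAt (fun w : ℂ => Real.log (h₀ * ‖g w‖ ^ 2))
      ((Complex.normSq c)⁻¹ •
        (((2*c.re) • Complex.reCLM + (2*c.im) • Complex.imCLM).comp
          ((ContinuousLinearMap.smulRight (1 : ℂ →L[ℂ] ℂ) d).restrictScalars ℝ))) z := by
    have hc0 : ∀ᶠ w in nhds z, g w ≠ 0 :=
      hga.continuousAt.eventually_ne hf'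
    apply (hlog.const_add (Real.log h₀)).congr_of_eventuallyEq
    filter_upwards [hc0] with w hw
    rw [Real.log_mul hh₀.ne' (pow_ne_zero 2 (norm_ne_zero_iff.mpr hw)), Complex.sq_norm]
  have hLeq : L = (Complex.normSq c)⁻¹ •
        (((2*c.re) • Complex.reCLM + (2*c.im) • Complex.imCLM).comp
          ((ContinuousLinearMap.smulRight (1 : ℂ →L[ℂ] ℂ) d).restrictScalars ℝ)) :=
    hL.unique hfull
  -- Step 2: derivatives of f ∘ φ
  have hφt : DifferentiableAt ℝ φ t := hφ.self_of_nhds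
  have hfev : ∀ᶠ s in nhds t, AnalyticAt ℂ f (φ s) :=
    hφt.continuousAt.eventually hf.eventually_analyticAt
  have hev : deriv (f ∘ φ) =ᶠ[nhds t] fun s => deriv φ s * deriv f (φ s) := by
    filter_upwards [hφ, hfev] with s hs1 hs2
    have h1 : HasDerivAt (f ∘ φ)
        (((ContinuousLinearMap.smulRight (1 : ℂ →L[ℂ] ℂ) (deriv f (φ s))).restrictScalars ℝ)
          (deriv φ s)) s :=
      HasFDerivAt.comp_hasDerivAt s
        ((hs2.differentiableAt.hasDerivAt.hasFDerivAt).restrictScalars ℝ) hs1.hasDerivAt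
    simpa using h1.deriv
  have hd1 : deriv (f ∘ φ) t = a * c := by
    have := hev.self_of_nhds
    simpa using this
  have hgφ : HasDerivAt (fun s => deriv f (φ s))
      (((ContinuousLinearMap.smulRight (1 : ℂ →L[ℂ] ℂ) d).restrictScalars ℝ) a) t :=
    HasFDerivAt.comp_hasDerivAt t hGf hφt.hasDerivAt
  have hgφ' : HasDerivAt (fun s => deriv f (φ s)) (a * d) t := by simpa using hgφ
  have hprod : HasDerivAt (fun s => deriv φ s * deriv f (φ s)) (b * c + a * (a * d)) t :=
    hφ2.hasDerivAt.mul hgφ'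
  have hd2 : deriv (deriv (f ∘ φ)) t = b * c + a * (a * d) := by
    rw [hev.deriv_eq]; exact hprod.deriv
  -- Step 3: curvature of image curve is zero ⇒ key identity
  have hAC : a * c ≠ 0 := mul_ne_zero hφ' hf'
  have hrefl : ((starRingEnd ℂ) (a * c) * (b * c + a * (a * d))).im = 0 := by
    have h0 := href
    rw [curv_eq, hd1, hd2] at h0
    rcases div_eq_zero_iff.mp h0 with h | h
    · exact h
    · exact absurd h (pow_ne_zero 3 (norm_ne_zero_iff.mpr hAC))
  have hA : (0:ℝ) < ‖a‖ := norm_pos_iff.mpr hφ'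
  have hcid : (starRingEnd ℂ) (a * c) * (b * c + a * (a * d)) =
      (Complex.normSq c : ℂ) * ((starRingEnd ℂ) a * b) +
        ((‖a‖ ^ 2 : ℝ) : ℂ) * ((starRingEnd ℂ) c * d * a) := by
    rw [Complex.normSq_eq_conj_mul_self, Complex.sq_norm, Complex.normSq_eq_conj_mul_self]
    simp only [map_mul]
    ring
  have hrefl2 : Complex.normSq c * ((starRingEnd ℂ) a * b).im +
      ‖a‖ ^ 2 * ((starRingEnd ℂ) c * d * a).im = 0 := by
    rw [hcid] at hrefl
    simp only [Complex.add_im, Complex.mul_im, Complex.mul_re, Complex.conj_re, Complex.conj_im,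
      Complex.ofReal_re, Complex.ofReal_im] at hrefl ⊢
    linarith [hrefl]
  -- Step 4: compute L (unitNormal φ t)
  have hLn : L (unitNormal φ t) =
      -2 * ((starRingEnd ℂ) c * d * a).im / (Complex.normSq c * ‖a‖) := by
    rw [hLeq]
    simp only [unitNormal, unitTangent, ← ha,
      ContinuousLinearMap.smul_apply, ContinuousLinearMap.coe_comp', Function.comp_apply,
      ContinuousLinearMap.coe_restrictScalars', ContinuousLinearMap.smulRight_apply,
      ContinuousLinearMap.one_apply, ContinuousLinearMap.add_apply,
      Complex.reCLM_apply, Complex.imCLM_apply, smul_eq_mul]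
    simp only [Complex.mul_re, Complex.mul_im, Complex.div_re, Complex.div_im,
      Complex.I_re, Complex.I_im, Complex.ofReal_re, Complex.ofReal_im,
      Complex.conj_re, Complex.conj_im, Complex.normSq_ofReal]
    field_simp
    ring
  -- Step 5: final algebra
  have key : kv = -2 * curv φ t := by
    rw [hkv, hLn, curv_eq, ← ha, ← hb]
    have h1 : Complex.normSq c ≠ 0 := hcns.ne'
    have h2 : ‖a‖ ≠ 0 := hA.ne'
    simp only [Complex.mul_im, Complex.mul_re, Complex.conj_re, Complex.conj_im] at hrefl2 ⊢
    field_simp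
    linear_combination hrefl2
  exact ⟨key, by linarith⟩
end
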